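/- For an operator precedence alphabet (Σ, M) with M conflict-free, any word a₀ x a_{n+1} admits at most one decomposition as the body of a chain: if ⌈a₀⌉ x ⌊a_{n+1}⌋ is a chain, then the partition of x into x₀ a₁ x₁ … aₙ xₙ with ⌈a₀⌉ a₁…aₙ ⌊a_{n+1}⌋ a simple chain and each xᵢ empty or a chain body is unique. -/

import Mathlib

/-! # Preliminaries: precedence relations, Floyd automata, chains, supports,
operator (Floyd) grammars. -/

/-- The three operator precedence relations. -/
inductive PrecRel : Type
  | lt  -- ⋖ , yields precedence
  | eq  -- ≐ , equal in precedence
  | gt  -- ⋗ , takes precedence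
deriving DecidableEq

/-- A (nondeterministic) Floyd automaton over a precedence alphabet `(T, M)`.
`none` plays the role of the delimiter `#`. -/
structure FloydAutomaton (T : Type*) (Q : Type*) where
  /-- conflict-free operator precedence matrix over `T ∪ {#}` -/
  M : Option T → Option T → Option PrecRel
  /-- initial states -/
  init : Set Q
  /-- final states -/
  final : Set Q
  /-- push transition function -/
  push : Q → T → Set Q
  /-- flush transition function -/
  flush : Q → Q → Set Q

namespace FloydAutomaton

/-- A configuration: the bottom stack symbol `(#, base)` is represented by `base`,
the rest of the stack is a list (top = head) of triples (marked?, symbol, state),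
and `input` is the remaining input (the trailing `#` is implicit). -/
structure Config (T : Type*) (Q : Type*) where
  base : Q
  stack : List (Bool × T × Q)
  input : List T

variable {T Q : Type*}

/-- Symbol on top of the stack (`none` = `#`). -/
def Config.topSym (c : Config T Q) : Option T := c.stack.head?.map (fun s => s.2.1)

/-- State on top of the stack. -/
def Config.topState (c : Config T Q) : Q := ((c.stack.head?.map (fun s => s.2.2)).getD c.base)

/-- Number of marked symbols on the stack. -/
def Config.marked (c : Config T Q) : ℕ := c.stack.countP (fun s => s.1)

variable (A : FloydAutomaton T Q)

/-- One move of a Floyd automaton: push (top ≐ current), mark (top ⋖ current),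
flush (top ⋗ current). -/
inductive Step : Config T Q → Config T Q → Prop
  | push {b : Q} {st : List (Bool × T × Q)} {w : List T} {q : Q} (a : T) :
      A.M (Config.topSym ⟨b, st, a :: w⟩) (some a) = some PrecRel.eq →
      q ∈ A.push (Config.topState ⟨b, st, a :: w⟩) a →
      Step ⟨b, st, a :: w⟩ ⟨b, (false, a, q) :: st, w⟩
  | mark {b : Q} {st : List (Bool × T × Q)} {w : List T} {q : Q} (a : T) :
      A.M (Config.topSym ⟨b, st, a :: w⟩) (some a) = some PrecRel.lt →
      q ∈ A.push (Config.topState ⟨b, st, a :: w⟩) a →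
      Step ⟨b, st, a :: w⟩ ⟨b, (true, a, q) :: st, w⟩
  | flushMid {b : Q} {pre : List (Bool × T × Q)} {x : T} {qm : Q}
      {s : Bool × T × Q} {rest : List (Bool × T × Q)} {w : List T} {q : Q} :
      (∀ p ∈ pre, p.1 = false) →
      A.M (Config.topSym ⟨b, pre ++ (true, x, qm) :: s :: rest, w⟩) w.head? = some PrecRel.gt →
      q ∈ A.flush (Config.topState ⟨b, pre ++ (true, x, qm) :: s :: rest, w⟩) s.2.2 →
      Step ⟨b, pre ++ (true, x, qm) :: s :: rest, w⟩ ⟨b, (s.1, s.2.1, q) :: rest, w⟩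
  | flushBot {b : Q} {pre : List (Bool × T × Q)} {x : T} {qm : Q} {w : List T} {q : Q} :
      (∀ p ∈ pre, p.1 = false) →
      A.M (Config.topSym ⟨b, pre ++ [(true, x, qm)], w⟩) w.head? = some PrecRel.gt →
      q ∈ A.flush (Config.topState ⟨b, pre ++ [(true, x, qm)], w⟩) b →
      Step ⟨b, pre ++ [(true, x, qm)], w⟩ ⟨q, [], w⟩

/-- Acceptance of a finite word. -/
def Accepts (x : List T) : Prop :=
  ∃ qI ∈ A.init, ∃ qF ∈ A.final,
    Relation.ReflTransGen A.Step ⟨qI, [], x⟩ ⟨qF, [], []⟩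

/-- The language recognized by a Floyd automaton. -/
def language : Set (List T) := { x | A.Accepts x }

/-- A Floyd automaton is deterministic iff it has one initial state and all
transition functions yield at most one state. -/
def Deterministic : Prop :=
  (∃ q, A.init = {q}) ∧ (∀ q a, (A.push q a).Subsingleton) ∧
    (∀ q p, (A.flush q p).Subsingleton)

/-- States of the powerset determinization: a lookback symbol together with a set
of pairs of states (`none` in the second component is `⊥`). -/
abbrev DetState (T : Type*) (Q : Type*) := Option T × Set (Q × Option Q)

/-- Push transition of the determinization. -/
def detPushF (s : DetState T Q) (a : T) : DetState T Q :=
  (some a, { ht | ∃ q p, (q, p) ∈ s.2 ∧ ht.1 ∈ A.push q a ∧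
      ((A.M s.1 (some a) = some PrecRel.lt ∧ ht.2 = some q) ∨
       (A.M s.1 (some a) = some PrecRel.eq ∧ ht.2 = p)) })

/-- Flush transition of the determinization. -/
def detFlushF (s₁ s₂ : DetState T Q) : DetState T Q :=
  (s₂.1, { hp | ∃ r q, (r, some q) ∈ s₁.2 ∧ (q, hp.2) ∈ s₂.2 ∧ hp.1 ∈ A.flush r q })

/-- The powerset determinization of a Floyd automaton. -/
def det : FloydAutomaton T (DetState T Q) where
  M := A.M
  init := {(none, { p | p.2 = none ∧ p.1 ∈ A.init })}
  final := { s | s.1 = none ∧ ∃ q ∈ A.final, (q, none) ∈ s.2 }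
  push := fun s a => {A.detPushF s a}
  flush := fun s₁ s₂ => {A.detFlushF s₁ s₂}

end FloydAutomaton

section Chains

variable {T : Type*}

mutual
/-- `ChainB M a₀ y b` : the word `y` is the body of a (simple or composed) chain
`⌈a₀⌉ y ⌊b⌋` over the precedence alphabet `(T, M)`. -/
inductive ChainB (M : Option T → Option T → Option PrecRel) :
    Option T → List T → Option T → Prop
  | head0 {a₀ b : Option T} {a₁ : T} {y : List T} :
      M a₀ b ≠ none →
      M a₀ (some a₁) = some PrecRel.lt →
      ChainT M a₁ y b →
      ChainB M a₀ (a₁ :: y) b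
  | head {a₀ b : Option T} {a₁ : T} {x₀ y : List T} :
      M a₀ b ≠ none →
      M a₀ (some a₁) = some PrecRel.lt →
      ChainB M a₀ x₀ (some a₁) →
      ChainT M a₁ y b →
      ChainB M a₀ (x₀ ++ a₁ :: y) b

/-- Auxiliary: tail of a chain body, after a skeleton symbol `a`. -/
inductive ChainT (M : Option T → Option T → Option PrecRel) :
    T → List T → Option T → Prop
  | last0 {a : T} {b : Option T} :
      M (some a) b = some PrecRel.gt →
      ChainT M a [] b
  | last {a : T} {xn : List T} {b : Option T} :
      ChainB M (some a) xn b →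
      M (some a) b = some PrecRel.gt →
      ChainT M a xn b
  | cons0 {a a' : T} {y : List T} {b : Option T} :
      M (some a) (some a') = some PrecRel.eq →
      ChainT M a' y b →
      ChainT M a (a' :: y) b
  | cons {a a' : T} {x y : List T} {b : Option T} :
      M (some a) (some a') = some PrecRel.eq →
      ChainB M (some a) x (some a') →
      ChainT M a' y b →
      ChainT M a (x ++ a' :: y) b
end

/-- `SimpleBody M a₀ l b` : `l` is the body `a₁ … aₙ` of a simple chain
`⌈a₀⌉ a₁ … aₙ ⌊b⌋`, i.e. `a₀ ⋖ a₁ ≐ … ≐ aₙ ⋗ b` with `M a₀ b` defined. -/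
def SimpleBody (M : Option T → Option T → Option PrecRel)
    (a₀ : Option T) (l : List T) (b : Option T) : Prop :=
  (l ≠ []) ∧ M a₀ b ≠ none ∧
  (∀ h : l ≠ [], M a₀ (some (l.head h)) = some PrecRel.lt ∧
      M (some (l.getLast h)) b = some PrecRel.gt) ∧
  List.Chain' (fun x y => M (some x) (some y) = some PrecRel.eq) l

/-- `≐`-acyclicity of a precedence matrix. -/
def EqAcyclic (M : Option T → Option T → Option PrecRel) : Prop :=
  ∀ x : Option T, ¬ Relation.TransGen (fun u v => M u v = some PrecRel.eq) x x

variable {Q : Type*}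

mutual
/-- `Supp A q y q'` : the automaton `A` has a support labelled by the chain body `y`
leading from state `q` to state `q'`, ending with a flush labelled by the state
reached after the first filler. -/
inductive Supp (A : FloydAutomaton T Q) : Q → List T → Q → Prop
  | head0 {q₀ q₁ qf : Q} {a₁ : T} {y : List T} :
      q₁ ∈ A.push q₀ a₁ →
      SuppT A q₀ q₁ y qf →
      Supp A q₀ (a₁ :: y) qf
  | head {q₀ q₀' q₁ qf : Q} {a₁ : T} {x₀ y : List T} :
      Supp A q₀ x₀ q₀' →
      q₁ ∈ A.push q₀' a₁ →
      SuppT A q₀' q₁ y qf →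
      Supp A q₀ (x₀ ++ a₁ :: y) qf

/-- Auxiliary: the tail of a support; the first argument after `A` is the label
of the final flush. -/
inductive SuppT (A : FloydAutomaton T Q) : Q → Q → List T → Q → Prop
  | last0 {q₀' qn qf : Q} :
      qf ∈ A.flush qn q₀' →
      SuppT A q₀' qn [] qf
  | last {q₀' qn q' qf : Q} {xn : List T} :
      Supp A qn xn q' →
      qf ∈ A.flush q' q₀' →
      SuppT A q₀' qn xn qf
  | cons0 {q₀' qi q'' qf : Q} {a : T} {y : List T} :
      q'' ∈ A.push qi a →
      SuppT A q₀' q'' y qf →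
      SuppT A q₀' qi (a :: y) qf
  | cons {q₀' qi q' q'' qf : Q} {a : T} {x y : List T} :
      Supp A qi x q' →
      q'' ∈ A.push q' a →
      SuppT A q₀' q'' y qf →
      SuppT A q₀' qi (x ++ a :: y) qf
end

end Chains

section Grammar

variable {T : Type*}

open Symbol in
/-- A symbol is a nonterminal. -/
def IsNT {N : Type*} : Symbol T N → Prop
  | Symbol.nonterminal _ => True
  | Symbol.terminal _ => False

/-- A string over `Σ ∪ N` has no two adjacent nonterminals. -/
def NoAdjNT {N : Type*} (l : List (Symbol T N)) : Prop :=
  List.Chain' (fun x y => ¬(IsNT x ∧ IsNT y)) l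

/-- An operator grammar: no right-hand side contains two adjacent nonterminals. -/
def OperatorGrammar (g : ContextFreeGrammar T) : Prop :=
  ∀ r ∈ g.rules, NoAdjNT r.output

/-- The equal-in-precedence relation `a ≐ b` of a grammar. -/
def GEq (g : ContextFreeGrammar T) (a b : T) : Prop :=
  ∃ r ∈ g.rules, ∃ α mid β,
    r.output = α ++ Symbol.terminal a :: (mid ++ Symbol.terminal b :: β) ∧
    (mid = [] ∨ ∃ B, mid = [Symbol.nonterminal B])

/-- The left terminal set: `a ∈ 𝓛(A)` iff `A ⇒* B a α` with `B ∈ N ∪ {ε}`. -/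
def LTerm (g : ContextFreeGrammar T) (A : g.NT) (a : T) : Prop :=
  ∃ pre α, g.Derives [Symbol.nonterminal A] (pre ++ Symbol.terminal a :: α) ∧
    (pre = [] ∨ ∃ B, pre = [Symbol.nonterminal B])

/-- The right terminal set: `a ∈ 𝓡(A)` iff `A ⇒* α a B` with `B ∈ N ∪ {ε}`. -/
def RTerm (g : ContextFreeGrammar T) (A : g.NT) (a : T) : Prop :=
  ∃ α post, g.Derives [Symbol.nonterminal A] (α ++ Symbol.terminal a :: post) ∧
    (post = [] ∨ ∃ B, post = [Symbol.nonterminal B])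

/-- The yields-precedence relation `a ⋖ b` of a grammar. -/
def GLt (g : ContextFreeGrammar T) (a b : T) : Prop :=
  ∃ r ∈ g.rules, ∃ α β D,
    r.output = α ++ Symbol.terminal a :: Symbol.nonterminal D :: β ∧ LTerm g D b

/-- The takes-precedence relation `a ⋗ b` of a grammar. -/
def GGt (g : ContextFreeGrammar T) (a b : T) : Prop :=
  ∃ r ∈ g.rules, ∃ α β D,
    r.output = α ++ Symbol.nonterminal D :: Symbol.terminal b :: β ∧ RTerm g D a

/-- Conflict-freeness: for each pair of terminals at most one precedence relation holds. -/
def ConflictFree (g : ContextFreeGrammar T) : Prop :=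
  ∀ a b : T, ¬(GEq g a b ∧ GLt g a b) ∧ ¬(GEq g a b ∧ GGt g a b) ∧
    ¬(GLt g a b ∧ GGt g a b)

/-- A Floyd (operator precedence) grammar. -/
def FloydGrammar (g : ContextFreeGrammar T) : Prop :=
  OperatorGrammar g ∧ ConflictFree g

end Grammar


variable {T : Type*}

/-- The body determined by a decomposition `x₀ a₁ x₁ … aₙ xₙ`
(`parts = [(x₀,a₁),…,(x_{n-1},aₙ)]`, last filler `xn`). -/
def decompBody (parts : List (List T × T)) (xn : List T) : List T :=
  (parts.map (fun p => p.1 ++ [p.2])).flatten ++ xn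

/-- `IsDecomp M a₀ parts xn b` : the decomposition `x₀ a₁ x₁ … aₙ xₙ` witnesses
that its body is a chain body from `a₀` to `b`: the skeleton `a₁ … aₙ` is a
simple chain body and every filler is empty or a chain body. -/
def IsDecomp (M : Option T → Option T → Option PrecRel)
    (a₀ : Option T) (parts : List (List T × T)) (xn : List T) (b : Option T) :
    Prop :=
  SimpleBody M a₀ (parts.map Prod.snd) b ∧
  (∀ p, parts.head? = some p → (p.1 = [] ∨ ChainB M a₀ p.1 (some p.2))) ∧
  List.Chain' (fun p q => q.1 = [] ∨ ChainB M (some p.2) q.1 (some q.2)) parts ∧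
  (∀ an, (parts.map Prod.snd).getLast? = some an →
    (xn = [] ∨ ChainB M (some an) xn b))

/- The proof reads the two decompositions from the left. The heart of it is that a chain body
`x₀ a₁ y` from `α` (first filler `x₀`, first skeleton symbol `a₁`) has no prefix `x₂`, followed by
a letter `c₂`, that is a chain body from `α` to `c₂` and reaches past `a₁`. This is proved together
with two companions: such a prefix always has `α ⋖ c₂`, and a chain tail from `d` is never a
proper prefix of another one. Splitting two factorizations of the same word reduces each of
the three to the others on shorter words. Since `M` gives each pair at most one relation,
two decompositions therefore share their first filler and skeleton symbol, and induction along
the skeleton does the rest. -/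

theorem append_cons_trichotomy {β : Type*} {u u' σ σ' : List β} {g g' : β}
    (h : u ++ g :: σ = u' ++ g' :: σ') :
    (u = u' ∧ g = g' ∧ σ = σ') ∨
    (∃ δ, u' = u ++ g :: δ ∧ σ = δ ++ g' :: σ') ∨
    (∃ δ, u = u' ++ g' :: δ ∧ σ' = δ ++ g :: σ) := by
  rcases List.append_eq_append_iff.mp h with ⟨_ | ⟨a, δ⟩, rfl, h'⟩ | ⟨_ | ⟨a, δ⟩, rfl, h'⟩ <;>
    simp only [List.nil_append, List.cons_append, List.cons.injEq] at h'
  · exact Or.inl ⟨by simp, h'⟩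
  · exact Or.inr (Or.inl ⟨δ, by rw [h'.1], h'.2⟩)
  · exact Or.inl ⟨by simp, h'.1.symm, h'.2.symm⟩
  · exact Or.inr (Or.inr ⟨δ, by rw [h'.1], h'.2⟩)

theorem eq_append_cons_of_length_lt {β : Type*} {τ δ r y : List β} {c a : β}
    (h : τ ++ c :: r = δ ++ a :: y) (hlt : δ.length < τ.length) :
    ∃ ρ, τ = δ ++ a :: ρ := by
  rcases append_cons_trichotomy h with ⟨rfl, -, -⟩ | ⟨ρ, rfl, -⟩ | ⟨ρ, rfl, -⟩
  · omega
  · simp at hlt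
  · exact ⟨ρ, rfl⟩

section Chains

variable {M : Option T → Option T → Option PrecRel}

def Filler (M : Option T → Option T → Option PrecRel) (α : Option T) (w : List T)
    (ξ : Option T) : Prop :=
  w = [] ∨ ChainB M α w ξ

theorem Filler.chainB {α ξ : Option T} {w : List T} (hw : Filler M α w ξ) (hne : w ≠ []) :
    ChainB M α w ξ :=
  hw.resolve_left hne

theorem ChainB.exists_layer {α ξ : Option T} {z : List T} (h : ChainB M α z ξ) :
    ∃ u g σ, z = u ++ g :: σ ∧ Filler M α u (some g) ∧ M α (some g) = some .lt ∧
      ChainT M g σ ξ := by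
  cases h with
  | head0 _ hlt hT => exact ⟨[], _, _, rfl, Or.inl rfl, hlt, hT⟩
  | head _ hlt hB hT => exact ⟨_, _, _, rfl, Or.inr hB, hlt, hT⟩

theorem ChainT.cases_layer {d : T} {t : List T} {ξ : Option T} (h : ChainT M d t ξ) :
    (Filler M (some d) t ξ ∧ M (some d) ξ = some .gt) ∨
    ∃ w e y, t = w ++ e :: y ∧ Filler M (some d) w (some e) ∧
      M (some d) (some e) = some .eq ∧ ChainT M e y ξ := by
  cases h with
  | last0 hgt => exact Or.inl ⟨Or.inl rfl, hgt⟩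
  | last hB hgt => exact Or.inl ⟨Or.inr hB, hgt⟩
  | cons0 heq hT => exact Or.inr ⟨[], _, _, rfl, Or.inl rfl, heq, hT⟩
  | cons heq hB hT => exact Or.inr ⟨_, _, _, rfl, Or.inr hB, heq, hT⟩

theorem ChainT.of_filler {d : T} {t : List T} {ξ : Option T} (ht : Filler M (some d) t ξ)
    (hgt : M (some d) ξ = some .gt) : ChainT M d t ξ := by
  rcases ht with rfl | hB
  · exact .last0 hgt
  · exact .last hB hgt

theorem ChainT.of_filler_cons {d e : T} {w y : List T} {ξ : Option T}
    (heq : M (some d) (some e) = some .eq) (hw : Filler M (some d) w (some e))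
    (hy : ChainT M e y ξ) : ChainT M d (w ++ e :: y) ξ := by
  rcases hw with rfl | hB
  · exact .cons0 heq hy
  · exact .cons heq hB hy

/- Simultaneous well-founded induction on the lengths of the words involved. The measures
`3 * size + k` allow a call at equal size only towards a smaller `k`: `not_chainT_prefix` calls
the other two, `lt_of_filler_prefix` calls the first. Equations that would rewrite a parameter
are kept as hypotheses instead of being substituted: the termination proofs read lengths off
them. -/
mutual

theorem length_le_of_chainB_prefix {α b : Option T} {x₀ y x₂ r : List T} {a₁ c₂ : T}
    (hx₀ : Filler M α x₀ (some a₁)) (hy : ChainT M a₁ y b) (hx₂ : ChainB M α x₂ (some c₂))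
    (heq : x₀ ++ a₁ :: y = x₂ ++ c₂ :: r) : x₂.length ≤ x₀.length := by
  by_contra! hlt
  obtain ⟨u₀, b₁, τ, hx₂u, hu₀, -, hτ⟩ := hx₂.exists_layer
  rw [hx₂u, List.append_assoc, List.cons_append] at heq
  rcases append_cons_trichotomy heq with ⟨rfl, rfl, hyτ⟩ | ⟨δ, rfl, hyδ⟩ | ⟨δ, hx₀u, hδ⟩
  · exact not_chainT_prefix hτ (hyτ ▸ hy)
  · have := length_le_of_chainB_prefix hx₀ hy (hu₀.chainB (by simp)) (r := τ ++ c₂ :: r)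
      (by rw [hyδ]; simp)
    simp at this
  · obtain ⟨ρ, rfl⟩ := eq_append_cons_of_length_lt hδ (by simp [hx₂u, hx₀u] at hlt; omega)
    have := length_le_of_chainB_prefix hu₀ hτ (hx₀.chainB (by simp [hx₀u])) (r := ρ)
      (by simp [hx₀u])
    simp [hx₀u] at this
termination_by 3 * (x₂.length + (x₀.length + 1 + y.length))
decreasing_by all_goals subst_vars; simp only [List.length_append, List.length_cons]; omega

theorem lt_of_filler_prefix {α ξ : Option T} {u r : List T} {c : T}
    (hu : Filler M α u (some c)) (h : ChainB M α (u ++ c :: r) ξ) :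
    M α (some c) = some .lt := by
  obtain ⟨x₀, a₁, y, heq, hx₀, hlt, hy⟩ := h.exists_layer
  have hlen := congrArg List.length heq
  rcases append_cons_trichotomy heq with ⟨-, rfl, -⟩ | ⟨δ, rfl, hrδ⟩ | ⟨δ, hu₀, -⟩
  · exact hlt
  · exact lt_of_filler_prefix hu (hx₀.chainB (by simp))
  · have := length_le_of_chainB_prefix hx₀ hy (hu.chainB (by simp [hu₀])) heq.symm
    simp [hu₀] at this
termination_by 3 * (u.length + (u.length + 1 + r.length)) + 1
decreasing_by all_goals subst_vars; simp only [List.length_append, List.length_cons] at *; omega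

theorem not_chainT_prefix {d c : T} {ξ : Option T} {t r : List T}
    (h₁ : ChainT M d t (some c)) (h₂ : ChainT M d (t ++ c :: r) ξ) : False := by
  rcases h₂.cases_layer with ⟨ht₂, -⟩ | ⟨w', e', y', heq, hw', hde', hy'⟩
  · have hB₂ := ht₂.chainB (by simp)
    rcases h₁.cases_layer with ⟨ht, hgt⟩ | ⟨w, e, y, ht, hw, hde, -⟩
    · exact nomatch hgt.symm.trans (lt_of_filler_prefix ht hB₂)
    · rw [ht] at hB₂
      exact nomatch hde.symm.trans
        (lt_of_filler_prefix hw (r := y ++ c :: r) (by simpa using hB₂))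
  · rcases h₁.cases_layer with ⟨ht, hgt⟩ | ⟨w, e, y, ht, hw, hde, hy⟩
    · rcases append_cons_trichotomy heq with ⟨-, rfl, -⟩ | ⟨δ, rfl, hr⟩ | ⟨δ, htδ, hy'δ⟩
      · exact nomatch hgt.symm.trans hde'
      · exact nomatch hgt.symm.trans (lt_of_filler_prefix ht (hw'.chainB (by simp)))
      · have := length_le_of_chainB_prefix hw' hy' (ht.chainB (by simp [htδ])) heq.symm
        simp [htδ] at this
    · rw [ht, List.append_assoc, List.cons_append] at heq
      rcases append_cons_trichotomy heq with ⟨rfl, rfl, rfl⟩ | ⟨δ, rfl, hyδ⟩ | ⟨δ, rfl, rfl⟩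
      · exact not_chainT_prefix hy hy'
      · have hlen := congrArg List.length hyδ
        exact nomatch hde.symm.trans (lt_of_filler_prefix hw (hw'.chainB (by simp)))
      · have := length_le_of_chainB_prefix hw' hy' (hw.chainB (by simp)) heq.symm
        simp at this
termination_by 3 * (t.length + (t.length + 1 + r.length)) + 2
decreasing_by all_goals subst_vars; simp only [List.length_append, List.length_cons] at *; omega

end

theorem first_layer_unique {α b b' : Option T} {x₀ x₀' y y' : List T} {a₁ a₁' : T}
    (hx₀ : Filler M α x₀ (some a₁)) (hy : ChainT M a₁ y b)
    (hx₀' : Filler M α x₀' (some a₁')) (hy' : ChainT M a₁' y' b')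
    (heq : x₀ ++ a₁ :: y = x₀' ++ a₁' :: y') : x₀ = x₀' ∧ a₁ = a₁' ∧ y = y' := by
  rcases append_cons_trichotomy heq with h | ⟨δ, rfl, -⟩ | ⟨δ, rfl, -⟩
  · exact h
  · exact absurd (length_le_of_chainB_prefix hx₀ hy (hx₀'.chainB (by simp)) heq) (by simp)
  · exact absurd (length_le_of_chainB_prefix hx₀' hy' (hx₀.chainB (by simp)) heq.symm) (by simp)

/- `TailDecomp M aᵢ [(xᵢ, aᵢ₊₁), …, (xₙ₋₁, aₙ)] xₙ b`: the part `xᵢ aᵢ₊₁ … aₙ xₙ` of a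
decomposition that follows the skeleton symbol `aᵢ`, mirroring the constructors of `ChainT`. -/
def TailDecomp (M : Option T → Option T → Option PrecRel) :
    T → List (List T × T) → List T → Option T → Prop
  | a, [], xn, ξ => Filler M (some a) xn ξ ∧ M (some a) ξ = some .gt
  | a, (w, e) :: ps, xn, ξ =>
      M (some a) (some e) = some .eq ∧ Filler M (some a) w (some e) ∧ TailDecomp M e ps xn ξ

@[simp]
theorem decompBody_nil (xn : List T) : decompBody [] xn = xn := by
  simp [decompBody]

@[simp]
theorem decompBody_cons (w : List T) (e : T) (ps : List (List T × T)) (xn : List T) :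
    decompBody ((w, e) :: ps) xn = w ++ e :: decompBody ps xn := by
  simp [decompBody]

theorem TailDecomp.chainT {a : T} {ps : List (List T × T)} {xn : List T} {ξ : Option T}
    (h : TailDecomp M a ps xn ξ) : ChainT M a (decompBody ps xn) ξ := by
  induction ps generalizing a with
  | nil => exact .of_filler h.1 h.2
  | cons p ps ih =>
    obtain ⟨w, e⟩ := p
    obtain ⟨heq, hw, ht⟩ := h
    rw [decompBody_cons]
    exact .of_filler_cons heq hw (ih ht)

theorem TailDecomp.nil_ne_cons {a e : T} {ξ : Option T} {w xn xn' : List T}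
    {ps : List (List T × T)} (h₁ : TailDecomp M a [] xn ξ)
    (h₂ : TailDecomp M a ((w, e) :: ps) xn' ξ) : xn ≠ decompBody ((w, e) :: ps) xn' := by
  rintro rfl
  obtain ⟨hxn, -⟩ := h₁
  obtain ⟨hae, hw, -⟩ := h₂
  rw [decompBody_cons] at hxn
  exact nomatch hae.symm.trans (lt_of_filler_prefix hw (hxn.chainB (by simp)))

theorem TailDecomp.unique {a : T} {ξ : Option T} {ps₁ ps₂ : List (List T × T)}
    {xn₁ xn₂ : List T} (h₁ : TailDecomp M a ps₁ xn₁ ξ) (h₂ : TailDecomp M a ps₂ xn₂ ξ)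
    (heq : decompBody ps₁ xn₁ = decompBody ps₂ xn₂) : ps₁ = ps₂ ∧ xn₁ = xn₂ := by
  induction ps₁ generalizing a ps₂ with
  | nil =>
    rcases ps₂ with _ | ⟨⟨w, e⟩, ps₂⟩
    · exact ⟨rfl, by simpa using heq⟩
    · exact absurd (by simpa using heq) (h₁.nil_ne_cons h₂)
  | cons p ps₁ ih =>
    obtain ⟨w, e⟩ := p
    rcases ps₂ with _ | ⟨⟨w', e'⟩, ps₂⟩
    · exact absurd (by simpa using heq.symm) (h₂.nil_ne_cons h₁)
    obtain ⟨-, hw, ht⟩ := h₁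
    obtain ⟨-, hw', ht'⟩ := h₂
    rw [decompBody_cons, decompBody_cons] at heq
    obtain ⟨rfl, rfl, hrest⟩ := first_layer_unique hw ht.chainT hw' ht'.chainT heq
    obtain ⟨rfl, rfl⟩ := ih ht ht' hrest
    exact ⟨rfl, rfl⟩

theorem tailDecomp_of_isChain {a : T} {w xn : List T} {b : Option T}
    {ps : List (List T × T)}
    (heq : List.IsChain (fun x y => M (some x) (some y) = some .eq) (a :: ps.map Prod.snd))
    (hfill : List.IsChain (fun p q => Filler M (some p.2) q.1 (some q.2)) ((w, a) :: ps))
    (hgt : M (some ((a :: ps.map Prod.snd).getLast (List.cons_ne_nil _ _))) b = some .gt)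
    (hxn : Filler M (some ((a :: ps.map Prod.snd).getLast (List.cons_ne_nil _ _))) xn b) :
    TailDecomp M a ps xn b := by
  induction ps generalizing a w with
  | nil => exact ⟨hxn, hgt⟩
  | cons p ps ih =>
    obtain ⟨w', e⟩ := p
    simp only [List.map_cons, List.isChain_cons_cons] at heq hfill
    simp only [List.map_cons, List.getLast_cons_cons] at hgt hxn
    exact ⟨heq.1, hfill.1, ih heq.2 hfill.2 hgt hxn⟩

theorem IsDecomp.exists_layer {a₀ b : Option T} {parts : List (List T × T)} {xn : List T}
    (h : IsDecomp M a₀ parts xn b) :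
    ∃ x₀ a₁ ps, parts = (x₀, a₁) :: ps ∧ Filler M a₀ x₀ (some a₁) ∧
      TailDecomp M a₁ ps xn b := by
  obtain ⟨⟨hne, -, hends, hskel⟩, hhead, hfill, hlast⟩ := h
  rcases parts with _ | ⟨⟨x₀, a₁⟩, ps⟩
  · exact absurd rfl hne
  refine ⟨x₀, a₁, ps, rfl, hhead _ rfl, tailDecomp_of_isChain hskel hfill (hends hne).2 ?_⟩
  exact hlast _ (List.getLast?_eq_getLast _)

end Chains

/-- over a conflict-free precedence alphabet, the decomposition of
a chain body into `x₀ a₁ x₁ … aₙ xₙ` is unique. -/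
theorem chain_decomposition_unique (M : Option T → Option T → Option PrecRel)
    (a₀ b : Option T) (x : List T) (hx : ChainB M a₀ x b)
    (parts₁ parts₂ : List (List T × T)) (xn₁ xn₂ : List T)
    (h₁ : IsDecomp M a₀ parts₁ xn₁ b) (h₂ : IsDecomp M a₀ parts₂ xn₂ b)
    (hb₁ : decompBody parts₁ xn₁ = x) (hb₂ : decompBody parts₂ xn₂ = x) :
    parts₁ = parts₂ ∧ xn₁ = xn₂ := by
  obtain ⟨x₀, a₁, ps₁, rfl, hx₀, ht₁⟩ := h₁.exists_layer
  obtain ⟨x₀', a₁', ps₂, rfl, hx₀', ht₂⟩ := h₂.exists_layer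
  rw [decompBody_cons] at hb₁ hb₂
  obtain ⟨rfl, rfl, hrest⟩ :=
    first_layer_unique hx₀ ht₁.chainT hx₀' ht₂.chainT (hb₁.trans hb₂.symm)
  obtain ⟨rfl, rfl⟩ := ht₁.unique ht₂ hrest
  exact ⟨rfl, rfl⟩
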